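/- Let (Ω, m₀, P) be a probability space, ι a linearly ordered index set, and ℱ a filtration on Ω indexed by ι with ℱ t ≤ m₀ for every t, such that P is sigma-finite on the trace of each ℱ t. Let D : Ω → ℝ be m₀-strongly measurable, nonnegative, integrable with ∫ D dP = 1, and define the probability measure Q := P.withDensity (fun ω => ENNReal.ofReal (D ω)) and the density process Z t := E_P[D | ℱ t] (conditional expectation under P). Let M : ι → Ω → ℝ be adapted to ℱ, with M t integrable with respect to Q and (fun ω => M t ω * Z t ω) integrable with respect to P for every t. Then M is a martingale with respect to ℱ under Q if and only if the process t ↦ M t * Z t is a martingale with respect to ℱ under P. -/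

import Mathlib

/-!
Under `Q = D · μ`, the `Q`-integral of an `ℱ t`-measurable `g` over `A ∈ ℱ t` equals
`∫_A g D dμ = ∫_A μ[g D | ℱ t] dμ = ∫_A g Z_t dμ` by the pull-out property. Hence the
set-integral characterisations of the martingale property for `M` under `Q` and for `M Z`
under `μ` are the same family of equations.
-/

open MeasureTheory
open scoped ENNReal

namespace MeasureTheory

variable {Ω ι E : Type*} {m₀ : MeasurableSpace Ω} {μ : Measure Ω}

theorem martingale_iff_setIntegral_eq [Preorder ι] [NormedAddCommGroup E] [NormedSpace ℝ E]
    [CompleteSpace E] {ℱ : Filtration ι m₀} [SigmaFiniteFiltration μ ℱ] {f : ι → Ω → E}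
    (hadp : StronglyAdapted ℱ f) (hint : ∀ i, Integrable (f i) μ) :
    Martingale f ℱ μ ↔ ∀ i j, i ≤ j → ∀ s, MeasurableSet[ℱ i] s →
      ∫ ω in s, f i ω ∂μ = ∫ ω in s, f j ω ∂μ := by
  refine ⟨fun hf i j hij s hs => hf.setIntegral_eq hij hs, fun h => ⟨hadp, fun i j hij => ?_⟩⟩
  exact (ae_eq_condExp_of_forall_setIntegral_eq (ℱ.le i) (hint j)
    (fun s _ _ => (hint i).integrableOn) (fun s hs _ => h i j hij s hs)
    (hadp i).aestronglyMeasurable).symm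

section WithDensityOfReal

variable {D : Ω → ℝ}

theorem setIntegral_withDensity_ofReal [NormedAddCommGroup E] [NormedSpace ℝ E]
    (hD : AEMeasurable D μ) (hDnn : 0 ≤ᵐ[μ] D) (g : Ω → E) {s : Set Ω} (hs : MeasurableSet s) :
    ∫ x in s, g x ∂μ.withDensity (fun x => ENNReal.ofReal (D x)) = ∫ x in s, D x • g x ∂μ := by
  rw [setIntegral_withDensity_eq_setIntegral_toReal_smul₀ hD.ennreal_ofReal.restrict
    (ae_of_all _ fun _ => ENNReal.ofReal_lt_top) g hs]
  refine setIntegral_congr_ae hs ?_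
  filter_upwards [hDnn] with x hx _
  rw [ENNReal.toReal_ofReal hx]

theorem integrable_withDensity_ofReal_iff [NormedAddCommGroup E] [NormedSpace ℝ E]
    (hD : AEMeasurable D μ) (hDnn : 0 ≤ᵐ[μ] D) {g : Ω → E} :
    Integrable g (μ.withDensity fun x => ENNReal.ofReal (D x)) ↔
      Integrable (fun x => D x • g x) μ := by
  rw [integrable_withDensity_iff_integrable_smul₀' hD.ennreal_ofReal
    (ae_of_all _ fun _ => ENNReal.ofReal_lt_top)]
  refine integrable_congr ?_
  filter_upwards [hDnn] with x hx
  rw [ENNReal.toReal_ofReal hx]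

theorem setIntegral_mul_condExp_eq_setIntegral_withDensity {m : MeasurableSpace Ω} (hm : m ≤ m₀)
    [SigmaFinite (μ.trim hm)] (hD : Integrable D μ) (hDnn : 0 ≤ᵐ[μ] D) {g : Ω → ℝ}
    (hg : StronglyMeasurable[m] g)
    (hgQ : Integrable g (μ.withDensity fun x => ENNReal.ofReal (D x)))
    {s : Set Ω} (hs : MeasurableSet[m] s) :
    ∫ x in s, g x * (μ[D | m]) x ∂μ =
      ∫ x in s, g x ∂μ.withDensity (fun x => ENNReal.ofReal (D x)) := by
  have hgD : Integrable (fun x => g x * D x) μ := by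
    simpa only [smul_eq_mul, mul_comm (D _)] using
      (integrable_withDensity_ofReal_iff hD.aemeasurable hDnn).1 hgQ
  calc ∫ x in s, g x * (μ[D | m]) x ∂μ = ∫ x in s, (μ[g * D | m]) x ∂μ :=
        setIntegral_congr_ae (hm s hs) <|
          (condExp_mul_of_stronglyMeasurable_left hg hgD hD).mono fun x hx _ => hx.symm
    _ = ∫ x in s, g x * D x ∂μ := setIntegral_condExp hm hgD hs
    _ = ∫ x in s, g x ∂μ.withDensity (fun x => ENNReal.ofReal (D x)) := by
        simp only [setIntegral_withDensity_ofReal hD.aemeasurable hDnn g (hm s hs), smul_eq_mul,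
          mul_comm (D _)]

end WithDensityOfReal

end MeasureTheory

theorem martingale_withDensity_iff_mul_condexp_martingale_general
    {Ω ι : Type*} [LinearOrder ι] {m₀ : MeasurableSpace Ω}
    (P : Measure Ω)
    (ℱ : Filtration ι m₀)
    [∀ t, SigmaFinite (P.trim (ℱ.le t))]
    (D : Ω → ℝ)
    (hDnn : 0 ≤ D) (hDint : Integrable D P)
    (M : ι → Ω → ℝ) (hadp : Adapted ℱ M)
    (hMQ : ∀ t, Integrable (M t) (P.withDensity fun ω => ENNReal.ofReal (D ω)))
    (hMZ : ∀ t, Integrable (fun ω => M t ω * (P[D | ℱ t]) ω) P) :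
    Martingale M ℱ (P.withDensity fun ω => ENNReal.ofReal (D ω)) ↔
      Martingale (fun t ω => M t ω * (P[D | ℱ t]) ω) ℱ P := by
  have := isFiniteMeasure_withDensity_ofReal hDint.hasFiniteIntegral
  have : SigmaFiniteFiltration P ℱ := ⟨fun _ => inferInstance⟩
  have bayes : ∀ t s, MeasurableSet[ℱ t] s → ∫ ω in s, M t ω * (P[D | ℱ t]) ω ∂P =
      ∫ ω in s, M t ω ∂P.withDensity fun ω => ENNReal.ofReal (D ω) := fun t _ hs =>
    setIntegral_mul_condExp_eq_setIntegral_withDensity (ℱ.le t) hDint (ae_of_all _ hDnn)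
      (hadp.stronglyAdapted t) (hMQ t) hs
  rw [martingale_iff_setIntegral_eq hadp.stronglyAdapted hMQ,
    martingale_iff_setIntegral_eq (f := fun t ω => M t ω * (P[D | ℱ t]) ω)
      (fun t => (hadp.stronglyAdapted t).mul stronglyMeasurable_condExp) hMZ]
  refine forall₂_congr fun i j => forall₃_congr fun hij s hs => ?_
  rw [bayes i s hs, bayes j s (ℱ.mono hij s hs)]

/-- Bayes change-of-measure rule for martingales, underlying the proof of
Proposition 3: with `Z t := E_P[D | ℱ t]` the density process of
`Q = D · P`, a process `M` is a `Q`-martingale exactly when the product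
process `M * Z` is a `P`-martingale. -/
theorem martingale_withDensity_iff_mul_condexp_martingale
    {Ω ι : Type*} [LinearOrder ι] {m₀ : MeasurableSpace Ω}
    (P : Measure Ω) [IsProbabilityMeasure P]
    (ℱ : Filtration ι m₀)
    [∀ t, SigmaFinite (P.trim (ℱ.le t))]
    (D : Ω → ℝ) (hDmeas : StronglyMeasurable D)
    (hDnn : 0 ≤ D) (hDint : Integrable D P)
    (hDnorm : ∫ ω, D ω ∂P = 1)
    (M : ι → Ω → ℝ) (hadp : Adapted ℱ M)
    (hMQ : ∀ t, Integrable (M t) (P.withDensity fun ω => ENNReal.ofReal (D ω)))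
    (hMZ : ∀ t, Integrable (fun ω => M t ω * (P[D | ℱ t]) ω) P) :
    Martingale M ℱ (P.withDensity fun ω => ENNReal.ofReal (D ω)) ↔
      Martingale (fun t ω => M t ω * (P[D | ℱ t]) ω) ℱ P :=
  martingale_withDensity_iff_mul_condexp_martingale_general P ℱ D hDnn hDint M hadp hMQ hMZ
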